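/- Validity-preserving weakening (unreachable relational atoms on the left): suppose the sequent Γ, x→a y ⊢ Δ is normal and valid, every labelled formula z:φ ∈ Γ satisfies z ∈ labs(Δ), x ∉ labs(Δ), and x is not reachable in Γ from any label of Δ; then Γ ⊢ Δ is valid. -/

import Mathlib

set_option maxHeartbeats 1000000

/-! ### Syntax of PDL -/

mutual
inductive PDLFormula : Type
  | bot : PDLFormula
  | atom : ℕ → PDLFormula
  | and : PDLFormula → PDLFormula → PDLFormula
  | or : PDLFormula → PDLFormula → PDLFormula
  | imp : PDLFormula → PDLFormula → PDLFormula
  | box : PDLProgram → PDLFormula → PDLFormula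
  deriving DecidableEq

inductive PDLProgram : Type
  | atom : ℕ → PDLProgram
  | comp : PDLProgram → PDLProgram → PDLProgram
  | choice : PDLProgram → PDLProgram → PDLProgram
  | test : PDLFormula → PDLProgram
  | star : PDLProgram → PDLProgram
  deriving DecidableEq
end

/-! ### Semantics of PDL -/

structure PDLModel where
  State : Type
  propI : ℕ → Set State
  progI : ℕ → Set (State × State)

mutual
def PDLFormula.sem (m : PDLModel) : PDLFormula → Set m.State
  | .bot => ∅
  | .atom p => m.propI p
  | .and φ ψ => PDLFormula.sem m φ ∩ PDLFormula.sem m ψ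
  | .or φ ψ => PDLFormula.sem m φ ∪ PDLFormula.sem m ψ
  | .imp φ ψ => (PDLFormula.sem m φ)ᶜ ∪ PDLFormula.sem m ψ
  | .box α φ => { s | ∀ t, (s, t) ∈ PDLProgram.sem m α → t ∈ PDLFormula.sem m φ }

def PDLProgram.sem (m : PDLModel) : PDLProgram → Set (m.State × m.State)
  | .atom a => m.progI a
  | .comp α β => { p | ∃ t, (p.1, t) ∈ PDLProgram.sem m α ∧ (t, p.2) ∈ PDLProgram.sem m β }
  | .choice α β => PDLProgram.sem m α ∪ PDLProgram.sem m β
  | .test φ => { p | p.1 = p.2 ∧ p.1 ∈ PDLFormula.sem m φ }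
  | .star α => { p | Relation.ReflTransGen (fun s t => (s, t) ∈ PDLProgram.sem m α) p.1 p.2 }
end

/-! ### Labelled sequents -/

abbrev Label := ℕ

inductive SeqElem : Type
  | rel : Label → ℕ → Label → SeqElem
  | lab : Label → PDLFormula → SeqElem
  deriving DecidableEq

structure Sequent where
  ant : Finset SeqElem
  suc : Finset SeqElem

def SeqElem.sat (m : PDLModel) (v : Label → m.State) : SeqElem → Prop
  | .rel x a y => (v x, v y) ∈ m.progI a
  | .lab x φ => v x ∈ PDLFormula.sem m φ

def Sequent.valid (S : Sequent) : Prop :=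
  ∀ (m : PDLModel) (v : Label → m.State),
    (∀ A ∈ S.ant, A.sat m v) → ∃ B ∈ S.suc, B.sat m v

def Sequent.falsifiedBy (S : Sequent) (m : PDLModel) (v : Label → m.State) : Prop :=
  (∀ A ∈ S.ant, A.sat m v) ∧ ∀ B ∈ S.suc, ¬ B.sat m v

/-! ### Labels, starred labels, reachability -/

def SeqElem.labels : SeqElem → Finset Label
  | .rel x _ y => {x, y}
  | .lab x _ => {x}

def labs (Γ : Finset SeqElem) : Finset Label := Γ.biUnion SeqElem.labels

def starred (Δ : Finset SeqElem) : Set Label :=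
  { x | ∃ α φ, SeqElem.lab x (PDLFormula.box (PDLProgram.star α) φ) ∈ Δ }

def relStep (Γ : Finset SeqElem) (x y : Label) : Prop := ∃ a, SeqElem.rel x a y ∈ Γ

/-- `x` reaches `y` through a (possibly empty) chain of relational atoms of `Γ`. -/
def reaches (Γ : Finset SeqElem) : Label → Label → Prop := Relation.ReflTransGen (relStep Γ)

/-- A set of relational atoms is acyclic when no label reaches itself via a nonempty chain. -/
def RelAcyclic (Γ : Finset SeqElem) : Prop := ∀ x, ¬ Relation.TransGen (relStep Γ) x x

def Sequent.Acyclic (S : Sequent) : Prop := RelAcyclic S.ant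

/-! ### Classification of formulas, normal sequents -/

def PDLFormula.isAtomic : PDLFormula → Prop
  | .bot => True
  | .atom _ => True
  | _ => False

def PDLFormula.isIterated : PDLFormula → Prop
  | .box (.star _) _ => True
  | _ => False

def SeqElem.isRel : SeqElem → Prop
  | .rel _ _ _ => True
  | _ => False

def NormalSeq (S : Sequent) : Prop :=
  (∀ A ∈ S.ant, A ∉ S.suc) ∧
  (∀ A ∈ S.suc, ∃ x φ, A = SeqElem.lab x φ ∧ (φ.isAtomic ∨ φ.isIterated)) ∧
  (∀ A ∈ S.ant, A.isRel ∨ ∃ x φ, A = SeqElem.lab x φ ∧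
      (φ.isAtomic ∨ ∃ a ψ, φ = PDLFormula.box (PDLProgram.atom a) ψ ∧
        ∀ y, SeqElem.rel x a y ∉ S.ant))

/-! ### Test-freeness and subformulas -/

mutual
def PDLFormula.TestFree : PDLFormula → Prop
  | .bot => True
  | .atom _ => True
  | .and φ ψ => PDLFormula.TestFree φ ∧ PDLFormula.TestFree ψ
  | .or φ ψ => PDLFormula.TestFree φ ∧ PDLFormula.TestFree ψ
  | .imp φ ψ => PDLFormula.TestFree φ ∧ PDLFormula.TestFree ψ
  | .box α φ => PDLProgram.TestFree α ∧ PDLFormula.TestFree φ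

def PDLProgram.TestFree : PDLProgram → Prop
  | .atom _ => True
  | .comp α β => PDLProgram.TestFree α ∧ PDLProgram.TestFree β
  | .choice α β => PDLProgram.TestFree α ∧ PDLProgram.TestFree β
  | .test _ => False
  | .star α => PDLProgram.TestFree α
end

def SeqElem.TestFree : SeqElem → Prop
  | .rel _ _ _ => True
  | .lab _ φ => φ.TestFree

def Sequent.TestFree (S : Sequent) : Prop :=
  (∀ A ∈ S.ant, A.TestFree) ∧ (∀ A ∈ S.suc, A.TestFree)

mutual
inductive Subf : PDLFormula → PDLFormula → Prop
  | refl (φ) : Subf φ φ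
  | andl {χ φ ψ} : Subf χ φ → Subf χ (PDLFormula.and φ ψ)
  | andr {χ φ ψ} : Subf χ ψ → Subf χ (PDLFormula.and φ ψ)
  | orl {χ φ ψ} : Subf χ φ → Subf χ (PDLFormula.or φ ψ)
  | orr {χ φ ψ} : Subf χ ψ → Subf χ (PDLFormula.or φ ψ)
  | impl {χ φ ψ} : Subf χ φ → Subf χ (PDLFormula.imp φ ψ)
  | impr {χ φ ψ} : Subf χ ψ → Subf χ (PDLFormula.imp φ ψ)
  | boxf {χ α φ} : Subf χ φ → Subf χ (PDLFormula.box α φ)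
  | boxp {χ α φ} : SubfP χ α → Subf χ (PDLFormula.box α φ)

inductive SubfP : PDLFormula → PDLProgram → Prop
  | compl {χ α β} : SubfP χ α → SubfP χ (PDLProgram.comp α β)
  | compr {χ α β} : SubfP χ β → SubfP χ (PDLProgram.comp α β)
  | choicel {χ α β} : SubfP χ α → SubfP χ (PDLProgram.choice α β)
  | choicer {χ α β} : SubfP χ β → SubfP χ (PDLProgram.choice α β)
  | test {χ φ} : Subf χ φ → SubfP χ (PDLProgram.test φ)
  | star {χ α} : SubfP χ α → SubfP χ (PDLProgram.star α)
end

/-! ### Label substitution -/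

def substLabel (x y z : Label) : Label := if z = x then y else z

def SeqElem.subst (x y : Label) : SeqElem → SeqElem
  | .rel z a w => .rel (substLabel x y z) a (substLabel x y w)
  | .lab z φ => .lab (substLabel x y z) φ

/-! Given `m, v` satisfying `Γ`, take two copies of `m`: labels that reach `x` in `Γ` are
evaluated in the right copy, all others in the left one, and a fresh `a`-edge is added from the
right copy of `v x` to the image of `y`. No edge leaves the left copy, so its inclusion is a
bounded morphism and preserves the truth of every PDL formula. The labels of `Δ` and of the
labelled formulas of `Γ` do not reach `x`, so they stay in the left copy, while the relational
atoms of `Γ` survive because a label with an edge into a label reaching `x` reaches `x` itself.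
The new model thus satisfies `Γ, x →a y`, hence some member of `Δ`, which then holds in `m`. -/

/-- Bounded morphism (p-morphism) of Kripke models, with the back-and-forth conditions on atomic
programs packed into one equivalence. -/
structure PDLModel.IsBoundedMorphism (m m' : PDLModel) (f : m.State → m'.State) : Prop where
  mem_propI_iff : ∀ p s, f s ∈ m'.propI p ↔ s ∈ m.propI p
  mem_progI_iff : ∀ b s u, (f s, u) ∈ m'.progI b ↔ ∃ t, (s, t) ∈ m.progI b ∧ f t = u

theorem Relation.reflTransGen_apply_left_iff {α β : Type*} {r : α → α → Prop}
    {r' : β → β → Prop} {f : α → β} (h : ∀ s u, r' (f s) u ↔ ∃ t, r s t ∧ f t = u)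
    (s : α) (u : β) : ReflTransGen r' (f s) u ↔ ∃ t, ReflTransGen r s t ∧ f t = u := by
  constructor
  · intro hsu
    induction hsu with
    | refl => exact ⟨s, .refl, rfl⟩
    | tail _ hstep ih =>
      obtain ⟨t, hst, rfl⟩ := ih
      obtain ⟨t', htt', rfl⟩ := (h t _).1 hstep
      exact ⟨t', hst.tail htt', rfl⟩
  · rintro ⟨t, hst, rfl⟩
    exact hst.lift f fun a b hab => (h a _).2 ⟨b, hab, rfl⟩

namespace PDLModel.IsBoundedMorphism

mutual

theorem mem_sem_formula_iff {m m' : PDLModel} {f : m.State → m'.State}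
    (hf : IsBoundedMorphism m m' f) :
    ∀ (φ : PDLFormula) (s : m.State), f s ∈ φ.sem m' ↔ s ∈ φ.sem m
  | .bot, _ => by simp [PDLFormula.sem]
  | .atom p, s => by simp only [PDLFormula.sem, hf.mem_propI_iff]
  | .and φ ψ, s => by
      simp only [PDLFormula.sem, Set.mem_inter_iff, hf.mem_sem_formula_iff φ,
        hf.mem_sem_formula_iff ψ]
  | .or φ ψ, s => by
      simp only [PDLFormula.sem, Set.mem_union, hf.mem_sem_formula_iff φ,
        hf.mem_sem_formula_iff ψ]
  | .imp φ ψ, s => by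
      simp only [PDLFormula.sem, Set.mem_union, Set.mem_compl_iff, hf.mem_sem_formula_iff φ,
        hf.mem_sem_formula_iff ψ]
  | .box α φ, s => by
      simp only [PDLFormula.sem, Set.mem_ofPred_eq, hf.mem_sem_program_iff α]
      constructor
      · intro h t hst
        exact (hf.mem_sem_formula_iff φ t).1 (h _ ⟨t, hst, rfl⟩)
      · rintro h _ ⟨t, hst, rfl⟩
        exact (hf.mem_sem_formula_iff φ t).2 (h t hst)

theorem mem_sem_program_iff {m m' : PDLModel} {f : m.State → m'.State}
    (hf : IsBoundedMorphism m m' f) :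
    ∀ (α : PDLProgram) (s : m.State) (u : m'.State),
      (f s, u) ∈ α.sem m' ↔ ∃ t, (s, t) ∈ α.sem m ∧ f t = u
  | .atom b, s, u => hf.mem_progI_iff b s u
  | .comp α β, s, u => by
      simp only [PDLProgram.sem, Set.mem_ofPred_eq]
      constructor
      · rintro ⟨_, hα, hβ⟩
        obtain ⟨t, hst, rfl⟩ := (hf.mem_sem_program_iff α s _).1 hα
        obtain ⟨w, htw, rfl⟩ := (hf.mem_sem_program_iff β t _).1 hβ
        exact ⟨w, ⟨t, hst, htw⟩, rfl⟩
      · rintro ⟨w, ⟨t, hst, htw⟩, rfl⟩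
        exact ⟨f t, (hf.mem_sem_program_iff α s _).2 ⟨t, hst, rfl⟩,
          (hf.mem_sem_program_iff β t _).2 ⟨w, htw, rfl⟩⟩
  | .choice α β, s, u => by
      simp only [PDLProgram.sem, Set.mem_union, hf.mem_sem_program_iff α s u,
        hf.mem_sem_program_iff β s u, ← exists_or, or_and_right]
  | .test φ, s, u => by
      simp only [PDLProgram.sem, Set.mem_ofPred_eq, ← hf.mem_sem_formula_iff φ]
      constructor
      · rintro ⟨rfl, h⟩
        exact ⟨s, ⟨rfl, h⟩, rfl⟩
      · rintro ⟨_, ⟨rfl, h⟩, rfl⟩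
        exact ⟨rfl, h⟩
  | .star α, s, u =>
      Relation.reflTransGen_apply_left_iff (hf.mem_sem_program_iff α) s u

end

theorem sat_comp_iff {m m' : PDLModel} {f : m.State → m'.State}
    (hf : IsBoundedMorphism m m' f) (hinj : f.Injective) (v : Label → m.State) (A : SeqElem) :
    A.sat m' (f ∘ v) ↔ A.sat m v := by
  cases A with
  | rel z b w =>
    simp only [SeqElem.sat, Function.comp_apply, hf.mem_progI_iff]
    constructor
    · rintro ⟨t, ht, hft⟩
      rwa [← hinj hft]
    · exact fun h => ⟨_, h, rfl⟩
  | lab z φ => exact hf.mem_sem_formula_iff φ (v z)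

end PDLModel.IsBoundedMorphism

theorem SeqElem.sat_congr {m : PDLModel} {v w : Label → m.State} {A : SeqElem}
    (h : ∀ z ∈ A.labels, v z = w z) : A.sat m v ↔ A.sat m w := by
  cases A with
  | rel z b u =>
    simp only [SeqElem.sat, h z (by simp [SeqElem.labels]), h u (by simp [SeqElem.labels])]
  | lab z φ => simp only [SeqElem.sat, h z (by simp [SeqElem.labels])]

/-- The left copy of `m` is a generated submodel; the right copy also has edges into the left
one and an extra `a`-edge from `inr s` to `t`. -/
abbrev PDLModel.cloneWithEdge (m : PDLModel) (a : ℕ) (s : m.State) (t : m.State ⊕ m.State) :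
    PDLModel where
  State := m.State ⊕ m.State
  propI p := Sum.elim id id ⁻¹' m.propI p
  progI b := {P | (P.1.isLeft → P.2.isLeft) ∧
    ((Sum.elim id id P.1, Sum.elim id id P.2) ∈ m.progI b ∨ (b = a ∧ P = (.inr s, t)))}

theorem PDLModel.isBoundedMorphism_inl_cloneWithEdge (m : PDLModel) (a : ℕ) (s : m.State)
    (t : m.State ⊕ m.State) : IsBoundedMorphism m (m.cloneWithEdge a s t) Sum.inl where
  mem_propI_iff _ _ := Iff.rfl
  mem_progI_iff b s' u := by cases u <;> simp

open Classical in
noncomputable def splitValuation {σ : Type*} (Γ : Finset SeqElem) (x : Label) (v : Label → σ)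
    (z : Label) : σ ⊕ σ :=
  if reaches Γ z x then .inr (v z) else .inl (v z)

theorem sat_splitValuation_rel {m : PDLModel} {a : ℕ} {s : m.State} {t : m.State ⊕ m.State}
    {Γ : Finset SeqElem} {x z w : Label} {b : ℕ} (v : Label → m.State)
    (hΓ : SeqElem.rel z b w ∈ Γ) (hzw : (v z, v w) ∈ m.progI b) :
    (SeqElem.rel z b w).sat (m.cloneWithEdge a s t) (splitValuation Γ x v) := by
  refine ⟨fun hz => ?_, Or.inl ?_⟩
  · by_cases hw : reaches Γ w x
    · have : reaches Γ z x := .head ⟨b, hΓ⟩ hw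
      simp [splitValuation, this] at hz
    · simp [splitValuation, hw]
  · unfold splitValuation
    split_ifs <;> exact hzw

/-- **Validity-preserving weakening (unreachable relational atoms on the left)**: suppose the
sequent `Γ, x →a y ⊢ Δ` is normal and valid, every labelled formula `z : φ ∈ Γ` satisfies
`z ∈ labs(Δ)`, `x ∉ labs(Δ)`, and `x` is not reachable in `Γ` from any label of `Δ`; then
`Γ ⊢ Δ` is valid. -/
theorem valid_weakening_rel_left (Γ Δ : Finset SeqElem) (x y : Label) (a : ℕ)
    (hnormal : NormalSeq ⟨insert (SeqElem.rel x a y) Γ, Δ⟩)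
    (hvalid : Sequent.valid ⟨insert (SeqElem.rel x a y) Γ, Δ⟩)
    (hΓlabs : ∀ z φ, SeqElem.lab z φ ∈ Γ → z ∈ labs Δ)
    (hx : x ∉ labs Δ)
    (hunreach : ∀ z ∈ labs Δ, ¬ reaches Γ z x) :
    Sequent.valid ⟨Γ, Δ⟩ := by
  intro m v hsat
  set v' := splitValuation Γ x v
  set m' := m.cloneWithEdge a (v x) (v' y)
  have hinl := m.isBoundedMorphism_inl_cloneWithEdge a (v x) (v' y)
  have hvx : v' x = .inr (v x) := if_pos .refl
  have hΔ : ∀ z ∈ labs Δ, v' z = .inl (v z) := fun z hz => if_neg (hunreach z hz)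
  have hant : ∀ A ∈ insert (SeqElem.rel x a y) Γ, A.sat m' v' := by
    refine Finset.forall_mem_insert _ _ _ |>.2 ⟨⟨by simp [hvx], Or.inr ⟨rfl, by rw [hvx]⟩⟩, ?_⟩
    rintro (⟨z, b, w⟩ | ⟨z, φ⟩) hA
    · exact sat_splitValuation_rel v hA (hsat _ hA)
    · show v' z ∈ φ.sem m'
      rw [hΔ z (hΓlabs z φ hA)]
      exact (hinl.mem_sem_formula_iff φ _).2 (hsat _ hA)
  obtain ⟨B, hB, hBsat⟩ := hvalid m' v' hant
  refine ⟨B, hB, (hinl.sat_comp_iff Sum.inl_injective v B).1 ((SeqElem.sat_congr ?_).1 hBsat)⟩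
  exact fun z hz => hΔ z (Finset.mem_biUnion.2 ⟨B, hB, hz⟩)
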